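/- Let K = (G, M_0 ∪ {a,b}, I) be a finite formal context, K_00 = (G, M_0, I) the context with the attributes a and b removed, and K_s the ∃-generalized context obtained by replacing a, b with a single attribute s whose extension is s' = a' ∪ b'. With h_X = |{A ∩ X | A ∈ Ext(K_00), A ∩ X ∉ Ext(K_00)}| for X ⊆ G, the increase satisfies |𝔅(K_s)| − |𝔅(K)| ≤ 2^{|a'|+|b'|} − 2^{|a'|} − 2^{|b'|} + 1. -/

import Mathlib

/-- The intent (attribute derivation) of a set of objects. -/
def intentOf {G M : Type*} (I : G → M → Prop) (A : Set G) : Set M :=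
  {m | ∀ g ∈ A, I g m}

/-- The extent (object derivation) of a set of attributes. -/
def extentOf {G M : Type*} (I : G → M → Prop) (B : Set M) : Set G :=
  {g | ∀ m ∈ B, I g m}

/-- The formal concepts of a context: pairs `(A, B)` with `A' = B` and `B' = A`. -/
def Concepts {G M : Type*} (I : G → M → Prop) : Set (Set G × Set M) :=
  {p | intentOf I p.1 = p.2 ∧ extentOf I p.2 = p.1}

/-- The context obtained from `(G, M₀, I₀)` by adding one fresh attribute
(coded `Sum.inr ()`) with extension `sext`. -/
def addOne {G M₀ : Type*} (I₀ : G → M₀ → Prop) (sext : Set G) :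
    G → (M₀ ⊕ Unit) → Prop :=
  fun g m => match m with
    | Sum.inl m' => I₀ g m'
    | Sum.inr _ => g ∈ sext

/-!
Every extent `X` of `K_s` is already an extent of `K`, unless `X ⊆ a' ∪ b'` while `X ⊈ a'`
and `X ⊈ b'`: only then can the closure of `X` in `K` be larger than in `K_s`. Such an `X` is
the union of the nonempty sets `X ∩ a' ⊆ a'` and `X ∩ b' ⊆ b'`, so there are at most
`(2^|a'| - 1)(2^|b'| - 1)` of them.
-/

open Set

section Extents

variable {G M : Type*}

def Extents (I : G → M → Prop) : Set (Set G) :=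
  {A | extentOf I (intentOf I A) = A}

lemma subset_extentOf_intentOf (I : G → M → Prop) (A : Set G) :
    A ⊆ extentOf I (intentOf I A) :=
  fun _ hg _ hm => hm _ hg

def conceptsEquivExtents (I : G → M → Prop) : Concepts I ≃ Extents I where
  toFun p := ⟨p.1.1, by
    obtain ⟨⟨A, B⟩, hAB, hBA⟩ := p
    simpa only [Extents, mem_ofPred_eq, hAB] using hBA⟩
  invFun A := ⟨(A.1, intentOf I A.1), rfl, A.2⟩
  left_inv := by
    rintro ⟨⟨A, B⟩, hAB : intentOf I A = B, -⟩
    subst hAB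
    rfl
  right_inv _ := rfl

lemma nat_card_concepts_eq_ncard_extents (I : G → M → Prop) :
    Nat.card (Concepts I) = (Extents I).ncard := by
  rw [Nat.card_congr (conceptsEquivExtents I), Nat.card_coe_set_eq]

end Extents

theorem mem_extents_of_mem_extents_addOne {G M₀ β : Type*} {I : G → (M₀ ⊕ β) → Prop}
    {S : Set G} (hS : ∀ b, {g | I g (Sum.inr b)} ⊆ S) {X : Set G}
    (hX : X ∈ Extents (addOne (fun g m => I g (Sum.inl m)) S))
    (hXS : X ⊆ S → ∃ b, X ⊆ {g | I g (Sum.inr b)}) :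
    X ∈ Extents I := by
  refine Subset.antisymm ?_ (subset_extentOf_intentOf I X)
  intro g hg
  rw [← hX]
  rintro (m | _) hm
  · exact hg (Sum.inl m) hm
  · obtain ⟨b, hXb⟩ := hXS hm
    exact hS b (hg (Sum.inr b) hXb)

theorem ncard_subsets_union_not_subset_le {α : Type*} {A B : Set α} (hA : A.Finite)
    (hB : B.Finite) :
    {X | X ⊆ A ∪ B ∧ ¬X ⊆ A ∧ ¬X ⊆ B}.ncard ≤ (2 ^ A.ncard - 1) * (2 ^ B.ncard - 1) := by
  have hfin : ((𝒫 A \ {∅}) ×ˢ (𝒫 B \ {∅})).Finite :=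
    hA.powerset.sdiff.prod hB.powerset.sdiff
  have hcover : {X | X ⊆ A ∪ B ∧ ¬X ⊆ A ∧ ¬X ⊆ B} ⊆
      (fun p : Set α × Set α => p.1 ∪ p.2) '' ((𝒫 A \ {∅}) ×ˢ (𝒫 B \ {∅})) := by
    rintro X ⟨hXAB, hXA, hXB⟩
    refine ⟨(X ∩ A, X ∩ B), ⟨⟨inter_subset_right, ?_⟩, ⟨inter_subset_right, ?_⟩⟩, ?_⟩
    · obtain ⟨x, hxX, hxB⟩ := not_subset.mp hXB
      exact Nonempty.ne_empty ⟨x, hxX, (hXAB hxX).resolve_right hxB⟩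
    · obtain ⟨x, hxX, hxA⟩ := not_subset.mp hXA
      exact Nonempty.ne_empty ⟨x, hxX, (hXAB hxX).resolve_left hxA⟩
    · simp only [← inter_union_distrib_left, inter_eq_left.mpr hXAB]
  calc _ ≤ _ := ncard_le_ncard hcover (hfin.image _)
    _ ≤ _ := ncard_image_le hfin
    _ = _ := by
      rw [ncard_prod, ncard_sdiff_singleton_of_mem (empty_subset A),
        ncard_sdiff_singleton_of_mem (empty_subset B),
        ncard_powerset A hA, ncard_powerset B hB]

theorem extents_addOne_subset {G M₀ : Type*} (I : G → (M₀ ⊕ Bool) → Prop) :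
    Extents (addOne (fun g m => I g (Sum.inl m))
        ({g | I g (Sum.inr false)} ∪ {g | I g (Sum.inr true)})) ⊆
      Extents I ∪ {X | X ⊆ {g | I g (Sum.inr false)} ∪ {g | I g (Sum.inr true)} ∧
        ¬X ⊆ {g | I g (Sum.inr false)} ∧ ¬X ⊆ {g | I g (Sum.inr true)}} := by
  intro X hX
  by_contra hnot
  simp only [mem_union, mem_ofPred_eq, not_or, not_and, not_not] at hnot
  refine hnot.1 (mem_extents_of_mem_extents_addOne ?_ hX fun hXS => ?_)
  · rintro (_ | _) g hg
    exacts [Or.inl hg, Or.inr hg]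
  · by_cases hXa : X ⊆ {g | I g (Sum.inr false)}
    exacts [⟨false, hXa⟩, ⟨true, hnot.2 hXS hXa⟩]

theorem stmt18_general {G M₀ : Type*} [Fintype G]
    (I : G → (M₀ ⊕ Bool) → Prop) (aext bext : Set G)
    (ha : aext = {g | I g (Sum.inr false)})
    (hb : bext = {g | I g (Sum.inr true)}) :
    (Nat.card (Concepts (addOne (fun g m => I g (Sum.inl m)) (aext ∪ bext))) : ℤ) -
        Nat.card (Concepts I) ≤
      2 ^ (aext.ncard + bext.ncard) - 2 ^ aext.ncard - 2 ^ bext.ncard + 1 := by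
  subst ha hb
  rw [nat_card_concepts_eq_ncard_extents, nat_card_concepts_eq_ncard_extents]
  have hcount := calc
    _ ≤ _ := ncard_le_ncard (extents_addOne_subset I)
    _ ≤ _ := ncard_union_le _ _
    _ ≤ _ := Nat.add_le_add_left
      (ncard_subsets_union_not_subset_le (toFinite _) (toFinite _)) _
  zify [Nat.one_le_two_pow] at hcount
  rw [pow_add]
  linarith

/-- Let `K = (G, M₀ ∪ {a, b}, I)` be a finite formal context (the attributes
`a` and `b` are coded as `Sum.inr false` and `Sum.inr true`), and let `K_s`
be the ∃-generalized context obtained by removing `a, b` and adding a single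
attribute `s` with extension `s' = a' ∪ b'`. Then
`|𝔅(K_s)| − |𝔅(K)| ≤ 2^(|a'|+|b'|) − 2^|a'| − 2^|b'| + 1`. -/
theorem stmt18 {G M₀ : Type*} [Fintype G] [Fintype M₀]
    (I : G → (M₀ ⊕ Bool) → Prop) (aext bext : Set G)
    (ha : aext = {g | I g (Sum.inr false)})
    (hb : bext = {g | I g (Sum.inr true)}) :
    (Nat.card (Concepts (addOne (fun g m => I g (Sum.inl m)) (aext ∪ bext))) : ℤ) -
        Nat.card (Concepts I) ≤
      2 ^ (aext.ncard + bext.ncard) - 2 ^ aext.ncard - 2 ^ bext.ncard + 1 :=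
  stmt18_general I aext bext ha hb
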